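/- arXiv:0908.4003 — 3 statements merged into one kernel-verified Lean document; each statement's English description precedes it below -/
import Mathlib

section
/- Fix an integer θ ≥ 1 and define the sequence (U_n)_{n≥0} by U_n = 0 for 0 ≤ n ≤ θ + 1, and U_n = 1 + (1/(n − θ − 1)) · Σ_{k=θ}^{n−2} (U_k + U_{n−k−2}) for n ≥ θ + 2. Then the power series Y(z) = Σ_{n≥0} U_n z^n has radius of convergence at least 1, and for every real z with |z| < 1 it satisfies the linear differential equation z(1−z)·Y′(z) + ((θ+1)(z−1) − z² − z^{θ+2})·Y(z) = z^{θ+2}/(1−z). -/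
/-!
With `Sₙ = U₀ + ⋯ + Uₙ`, the recurrence says `(n - θ - 1) Uₙ = (n - θ - 1)₊ + S_{n-2} + S_{n-θ-2}`
(all terms vanish for `n ≤ θ + 1`). Summing against `zⁿ`, the left side is `z Y' - (θ + 1) Y`,
`∑ Sₙ zⁿ = Y / (1 - z)`, and a shift of indices by `m` multiplies a generating function by `zᵐ`,
which gives `z Y' - (θ + 1) Y = z^{θ+2} / (1 - z)² + (z² + z^{θ+2}) Y / (1 - z)`. Convergence and
termwise differentiation on the unit disc follow from `0 ≤ Uₙ ≤ n`, since `Uₙ` is `1` plus an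
average of terms `U_k + U_{n-k-2} ≤ n - 2`.
-/

open Finset

/-- The coefficient sequence of `X ^ m * ∑ aₙ Xⁿ`. -/
def seqShift {R : Type*} [Zero R] (m : ℕ) (a : ℕ → R) (n : ℕ) : R :=
  if m ≤ n then a (n - m) else 0

def partialSum {M : Type*} [AddCommMonoid M] (c : ℕ → M) (n : ℕ) : M :=
  ∑ k ∈ range (n + 1), c k

theorem hasSum_seqShift_mul_pow {R : Type*} [CommSemiring R] [TopologicalSpace R]
    [IsTopologicalSemiring R] {a : ℕ → R} {z A : R} (m : ℕ)
    (h : HasSum (fun n ↦ a n * z ^ n) A) :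
    HasSum (fun n ↦ seqShift m a n * z ^ n) (z ^ m * A) := by
  rw [← (add_left_injective m).hasSum_iff]
  · refine (h.mul_left (z ^ m)).congr_fun fun n ↦ ?_
    simp [seqShift, pow_add, mul_left_comm, mul_comm]
  · rintro n hn
    have : n < m := by
      by_contra! hmn
      exact hn ⟨n - m, Nat.sub_add_cancel hmn⟩
    simp [seqShift, this.not_ge]

theorem partialSum_eq_seqShift_add {M : Type*} [AddCommMonoid M] (c : ℕ → M) (n : ℕ) :
    partialSum c n = seqShift 1 (partialSum c) n + c n := by
  cases n with
  | zero => simp [partialSum, seqShift]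
  | succ n => simp [partialSum, seqShift, sum_range_succ _ (n + 1)]

theorem HasSum.one_sub_mul_of_partialSum {R : Type*} [CommRing R] [TopologicalSpace R]
    [IsTopologicalRing R] {c : ℕ → R} {z T : R}
    (h : HasSum (fun n ↦ partialSum c n * z ^ n) T) :
    HasSum (fun n ↦ c n * z ^ n) ((1 - z) * T) := by
  have := h.sub (hasSum_seqShift_mul_pow 1 h)
  rw [pow_one, ← one_sub_mul] at this
  refine this.congr_fun fun n ↦ ?_
  rw [partialSum_eq_seqShift_add c n]
  ring

theorem norm_partialSum_le {E : Type*} [SeminormedAddCommGroup E] {c : ℕ → E} {C : ℝ} {k : ℕ}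
    (hc : ∀ n, ‖c n‖ ≤ C * ((n : ℝ) + 1) ^ k) (n : ℕ) :
    ‖partialSum c n‖ ≤ C * ((n : ℝ) + 1) ^ (k + 1) := by
  have hC : 0 ≤ C := by simpa using (norm_nonneg _).trans (hc 0)
  have hterm : ∀ i ∈ range (n + 1), ‖c i‖ ≤ C * ((n : ℝ) + 1) ^ k := fun i hi ↦
    (hc i).trans <| by
      have : (i : ℝ) ≤ n := by exact_mod_cast Nat.lt_succ_iff.mp (mem_range.mp hi)
      gcongr
  calc ‖partialSum c n‖ ≤ ∑ i ∈ range (n + 1), ‖c i‖ := norm_sum_le _ _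
    _ ≤ (n + 1) * (C * ((n : ℝ) + 1) ^ k) := by
        simpa using sum_le_card_nsmul _ _ _ hterm
    _ = C * ((n : ℝ) + 1) ^ (k + 1) := by ring

theorem summable_succ_pow_mul_geometric {r : ℝ} (hr₀ : 0 < r) (hr₁ : r < 1) (k : ℕ) :
    Summable fun n : ℕ ↦ ((n : ℝ) + 1) ^ k * r ^ n := by
  have h := (summable_nat_add_iff 1).mpr
    (summable_pow_mul_geometric_of_norm_lt_one (R := ℝ) k (by rwa [Real.norm_of_nonneg hr₀.le]))
  refine (h.mul_left r⁻¹).congr fun n ↦ ?_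
  simp only [Nat.cast_add, Nat.cast_one, pow_succ]
  field_simp

section PowerSeries

variable {𝕜 : Type*} [RCLike 𝕜] {c : ℕ → 𝕜} {C : ℝ} {k : ℕ} {z : 𝕜}

theorem summable_mul_pow_of_norm_le (hc : ∀ n, ‖c n‖ ≤ C * ((n : ℝ) + 1) ^ k) (hz : ‖z‖ < 1) :
    Summable fun n ↦ c n * z ^ n := by
  obtain ⟨r, hzr, hr₁⟩ := exists_between hz
  refine .of_norm_bounded ((summable_succ_pow_mul_geometric
    ((norm_nonneg z).trans_lt hzr) hr₁ k).mul_left C) fun n ↦ ?_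
  rw [norm_mul, norm_pow, ← mul_assoc]
  exact mul_le_mul (hc n) (pow_le_pow_left₀ (norm_nonneg z) hzr.le n) (by positivity)
    ((norm_nonneg _).trans (hc n))

theorem hasSum_mul_deriv_tsum_mul_pow (hc : ∀ n, ‖c n‖ ≤ C * ((n : ℝ) + 1) ^ k) (hz : ‖z‖ < 1) :
    HasSum (fun n ↦ n * c n * z ^ n) (z * deriv (fun x ↦ ∑' n, c n * x ^ n) z) := by
  obtain ⟨r, hzr, hr₁⟩ := exists_between hz
  have hr₀ : 0 < r := (norm_nonneg z).trans_lt hzr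
  have hC : 0 ≤ C := by simpa using (norm_nonneg _).trans (hc 0)
  set u : ℕ → ℝ := fun n ↦ C / r * (((n : ℝ) + 1) ^ (k + 1) * r ^ n)
  have hu : Summable u := (summable_succ_pow_mul_geometric hr₀ hr₁ (k + 1)).mul_left _
  have hbound : ∀ n (y : 𝕜), ‖y‖ ≤ r → ‖c n * (n * y ^ (n - 1))‖ ≤ u n := by
    intro n y hy
    have hpow : (n : ℝ) * ‖y‖ ^ (n - 1) ≤ ((n : ℝ) + 1) * r ^ n / r := by
      rcases n with _ | n
      · simp only [Nat.cast_zero, zero_mul, zero_add, pow_zero, one_mul]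
        positivity
      · rw [Nat.add_sub_cancel, pow_succ, mul_div_assoc, mul_div_cancel_right₀ _ hr₀.ne']
        push_cast
        gcongr
        linarith
    calc ‖c n * (n * y ^ (n - 1))‖ = ‖c n‖ * ((n : ℝ) * ‖y‖ ^ (n - 1)) := by
          simp [norm_mul, norm_pow]
      _ ≤ C * ((n : ℝ) + 1) ^ k * (((n : ℝ) + 1) * r ^ n / r) := by
          gcongr
          exact hc n
      _ = u n := by simp only [u]; ring
  have hderiv : HasDerivAt (fun x ↦ ∑' n, c n * x ^ n) (∑' n, c n * (n * z ^ (n - 1))) z := by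
    refine hasDerivAt_tsum_of_isPreconnected hu Metric.isOpen_ball
      (convex_ball (0 : 𝕜) r).isPreconnected
      (fun n y _ ↦ (hasDerivAt_pow n y).const_mul (c n)) (fun n y hy ↦ hbound n y ?_)
      (Metric.mem_ball_self hr₀) (summable_mul_pow_of_norm_le hc (by simp)) ?_
    · exact (mem_ball_zero_iff.mp hy).le
    · exact mem_ball_zero_iff.mpr hzr
  have hsum : Summable fun n ↦ c n * (n * z ^ (n - 1)) :=
    .of_norm_bounded hu fun n ↦ hbound n z hzr.le
  rw [hderiv.deriv]
  refine (hsum.hasSum.mul_left z).congr_fun fun n ↦ ?_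
  rcases n with _ | n
  · simp
  · rw [Nat.add_sub_cancel, pow_succ]
    ring

end PowerSeries

def QuasiRandomRec (θ : ℕ) (U : ℕ → ℝ) : Prop :=
  (∀ n, n ≤ θ + 1 → U n = 0) ∧
    ∀ n, θ + 2 ≤ n → U n = 1 + 1 / ((n : ℝ) - θ - 1) * ∑ k ∈ Icc θ (n - 2), (U k + U (n - k - 2))

namespace QuasiRandomRec

variable {θ : ℕ} {U : ℕ → ℝ}

theorem nonneg_and_le (hU : QuasiRandomRec θ U) (n : ℕ) : 0 ≤ U n ∧ U n ≤ n := by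
  induction n using Nat.strong_induction_on with
  | _ n ih =>
  rcases le_or_gt n (θ + 1) with hn | hn
  · simp [hU.1 n hn]
  have hterm : ∀ k ∈ Icc θ (n - 2), 0 ≤ U k + U (n - k - 2) ∧ U k + U (n - k - 2) ≤ n - 2 := by
    intro k hk
    have hk := mem_Icc.mp hk
    have hcast : ((n - k - 2 : ℕ) : ℝ) = n - k - 2 := by
      rw [Nat.sub_sub, Nat.cast_sub (by omega)]
      push_cast
      ring
    obtain ⟨h₁, h₁'⟩ := ih k (by omega)
    obtain ⟨h₂, h₂'⟩ := ih (n - k - 2) (by omega)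
    constructor <;> linarith
  have hcard : ((Icc θ (n - 2)).card : ℝ) = n - θ - 1 := by
    rw [Nat.card_Icc, show n - 2 + 1 - θ = n - (θ + 1) by omega, Nat.cast_sub (by omega)]
    push_cast
    ring
  have hN : (0 : ℝ) < n - θ - 1 := by
    have : (θ : ℝ) + 2 ≤ n := by exact_mod_cast hn
    linarith
  have hsum₀ := sum_nonneg fun k hk ↦ (hterm k hk).1
  have hsum₁ := sum_le_card_nsmul _ _ _ fun k hk ↦ (hterm k hk).2
  rw [nsmul_eq_mul, hcard] at hsum₁
  rw [hU.2 n hn, one_div_mul_eq_div]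
  constructor
  · positivity
  · have := (div_le_iff₀' hN).mpr hsum₁
    linarith

theorem sub_mul_eq_seqShift_add (hU : QuasiRandomRec θ U) (n : ℕ) :
    ((n : ℝ) - θ - 1) * U n = seqShift (θ + 2) (fun k ↦ (k : ℝ) + 1) n
      + seqShift 2 (partialSum U) n + seqShift (θ + 2) (partialSum U) n := by
  rcases lt_or_ge n (θ + 2) with hn | hn
  · have hS : seqShift 2 (partialSum U) n = 0 := by
      unfold seqShift partialSum
      split_ifs
      · exact sum_eq_zero fun k hk ↦ hU.1 k (by rw [mem_range] at hk; omega)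
      · rfl
    rw [hU.1 n (by omega), hS]
    simp [seqShift, hn.not_ge]
  have hfirst : ∑ k ∈ Icc θ (n - 2), U k = partialSum U (n - 2) := by
    refine sum_subset (fun k hk ↦ ?_) fun k hk hk' ↦ hU.1 k ?_
    · simp only [mem_Icc, mem_range] at hk ⊢; omega
    · simp only [mem_Icc, mem_range, not_and, not_le] at hk hk'; omega
  have hsecond : ∑ k ∈ Icc θ (n - 2), U (n - k - 2) = partialSum U (n - (θ + 2)) := by
    have hreflect := sum_Ico_reflect U θ (le_refl (n - 2 + 1))
    rw [show n - 2 + 1 - (n - 2 + 1) = 0 by omega, show n - 2 + 1 - θ = n - (θ + 2) + 1 by omega,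
      Ico_add_one_right_eq_Icc, ← range_eq_Ico] at hreflect
    rw [partialSum, ← hreflect]
    exact sum_congr rfl fun k _ ↦ by congr 1; omega
  have hN : (n : ℝ) - θ - 1 ≠ 0 := by
    have : (θ : ℝ) + 2 ≤ n := by exact_mod_cast hn
    linarith
  simp only [seqShift, if_pos hn, if_pos (show 2 ≤ n by omega)]
  rw [hU.2 n hn, sum_add_distrib, hfirst, hsecond, Nat.cast_sub hn]
  field_simp
  push_cast
  ring

end QuasiRandomRec

theorem quasi_random_ode_general (θ : ℕ) (U : ℕ → ℝ)
    (h0 : ∀ n : ℕ, n ≤ θ + 1 → U n = 0)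
    (hrec : ∀ n : ℕ, θ + 2 ≤ n →
      U n = 1 + (1 / ((n : ℝ) - θ - 1)) *
        ∑ k ∈ Finset.Icc θ (n - 2), (U k + U (n - k - 2))) :
    (∀ z : ℝ, |z| < 1 → Summable fun n : ℕ => U n * z ^ n) ∧
    (∀ z : ℝ, |z| < 1 →
      z * (1 - z) * deriv (fun x : ℝ => ∑' n : ℕ, U n * x ^ n) z
        + (((θ : ℝ) + 1) * (z - 1) - z ^ 2 - z ^ (θ + 2)) * (∑' n : ℕ, U n * z ^ n)
        = z ^ (θ + 2) / (1 - z)) := by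
  have hU : QuasiRandomRec θ U := ⟨h0, hrec⟩
  have hbound : ∀ n, ‖U n‖ ≤ 1 * ((n : ℝ) + 1) ^ 1 := fun n ↦ by
    obtain ⟨h₁, h₂⟩ := hU.nonneg_and_le n
    rw [Real.norm_of_nonneg h₁]
    linarith
  have hsumm : ∀ z : ℝ, |z| < 1 → Summable fun n ↦ U n * z ^ n := fun z hz ↦
    summable_mul_pow_of_norm_le hbound (by rwa [Real.norm_eq_abs])
  refine ⟨hsumm, fun z hz ↦ ?_⟩
  have hz' : ‖z‖ < 1 := by rwa [Real.norm_eq_abs]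
  have hz₁ : 1 - z ≠ 0 := by linarith [(abs_lt.mp hz).2]
  have hY := (hsumm z hz).hasSum
  obtain ⟨T, hT⟩ := summable_mul_pow_of_norm_le (norm_partialSum_le hbound) hz'
  have hYT : ∑' n, U n * z ^ n = (1 - z) * T := hY.unique hT.one_sub_mul_of_partialSum
  have hgeom : HasSum (fun n : ℕ ↦ ((n : ℝ) + 1) * z ^ n) (1 / (1 - z) ^ 2) := by
    simpa using hasSum_choose_mul_geometric_of_norm_lt_one 1 hz'
  have hshifted := ((hasSum_seqShift_mul_pow (θ + 2) hgeom).add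
    (hasSum_seqShift_mul_pow 2 hT)).add (hasSum_seqShift_mul_pow (θ + 2) hT)
  have key := ((hasSum_mul_deriv_tsum_mul_pow hbound hz').sub (hY.mul_left ((θ : ℝ) + 1))).unique
    <| hshifted.congr_fun fun n ↦ by
      rw [← add_mul, ← add_mul, ← hU.sub_mul_eq_seqShift_add n]
      ring
  have hcancel : (1 - z) * (z ^ (θ + 2) * (1 / (1 - z) ^ 2)) = z ^ (θ + 2) / (1 - z) := by
    field_simp
  rw [hYT] at key ⊢
  linear_combination (1 - z) * key + hcancel

/-- Fix `θ ≥ 1` and let `(U_n)` be the sequence with `U_n = 0` for `n ≤ θ + 1` and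
`U_n = 1 + (1/(n − θ − 1)) Σ_{k=θ}^{n−2} (U_k + U_{n−k−2})` for `n ≥ θ + 2`. Then
`Y(z) = Σ U_n zⁿ` has radius of convergence at least `1` and satisfies, for `|z| < 1`,
`z(1−z)Y′(z) + ((θ+1)(z−1) − z² − z^{θ+2})Y(z) = z^{θ+2}/(1−z)`. -/
theorem quasi_random_ode (θ : ℕ) (hθ : 1 ≤ θ) (U : ℕ → ℝ)
    (h0 : ∀ n : ℕ, n ≤ θ + 1 → U n = 0)
    (hrec : ∀ n : ℕ, θ + 2 ≤ n →
      U n = 1 + (1 / ((n : ℝ) - θ - 1)) *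
        ∑ k ∈ Finset.Icc θ (n - 2), (U k + U (n - k - 2))) :
    (∀ z : ℝ, |z| < 1 → Summable fun n : ℕ => U n * z ^ n) ∧
    (∀ z : ℝ, |z| < 1 →
      z * (1 - z) * deriv (fun x : ℝ => ∑' n : ℕ, U n * x ^ n) z
        + (((θ : ℝ) + 1) * (z - 1) - z ^ 2 - z ^ (θ + 2)) * (∑' n : ℕ, U n * z ^ n)
        = z ^ (θ + 2) / (1 - z)) :=
  quasi_random_ode_general θ U h0 hrec
end

section
/- Fix an integer θ ≥ 1 and define the sequence (U_n)_{n≥0} by U_n = 0 for 0 ≤ n ≤ θ + 1, and U_n = 1 + (1/(n − θ − 1)) · Σ_{k=θ}^{n−2} (U_k + U_{n−k−2}) for n ≥ θ + 2. Then for every real z with 0 ≤ z < 1, Σ_{n≥0} U_n z^n = (z^{θ+1}/(1−z)²) · exp(−z − Σ_{j=1}^{θ+1} z^j/j) · ∫₀^z exp(t + Σ_{j=1}^{θ+1} t^j/j) dt. -/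
/-!
Put `G y = ∑ U (m + θ + 1) yᵐ`, so that `∑ Uₙ zⁿ = z^(θ+1) G z`. Multiplying the recurrence by
`n - θ - 1` turns its two convolution sums into Cauchy products with `1 / (1 - y)`, and summing
against `yⁿ` gives the linear ODE `(1 - y)² G' = 1 + (y + y^(θ+1)) (1 - y) G` on `(-1, 1)`.
With `h y = y + ∑_{j ≤ θ+1} yʲ / j` we have `h' = 1 + (1 - y^(θ+1)) / (1 - y)`, so `exp h` is an
integrating factor: `(exp h · (1 - y)² G)' = exp h`. Integrating from `0`, where `G` vanishes,
gives the closed form. The bound `0 ≤ Uₙ ≤ n` makes every series involved converge on `(-1, 1)`.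
-/

open Finset

theorem Finset.sum_range_eq_sum_range_sub_of_eq_zero {M : Type*} [AddCommMonoid M] {f : ℕ → M}
    {s : ℕ} (hf : ∀ k < s, f k = 0) (m : ℕ) :
    ∑ k ∈ range m, f k = ∑ k ∈ range (m - s), f (k + s) := by
  rcases le_total s m with hsm | hms
  · obtain ⟨t, rfl⟩ := Nat.exists_eq_add_of_le hsm
    rw [sum_range_add, sum_eq_zero fun k hk => hf k (mem_range.mp hk), zero_add,
      Nat.add_sub_cancel_left]
    simp only [add_comm s]
  · rw [Nat.sub_eq_zero_of_le hms, range_zero, sum_empty]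
    exact sum_eq_zero fun k hk => hf k ((mem_range.mp hk).trans_le hms)

section PowerSeries

variable {a : ℕ → ℝ} {C : ℝ}

theorem summable_norm_mul_pow_of_abs_le (ha : ∀ n, |a n| ≤ C * (n + 1)) {x : ℝ} (hx : |x| < 1) :
    Summable fun n => ‖a n * x ^ n‖ := by
  have hx' : ‖|x|‖ < 1 := by rwa [Real.norm_eq_abs, abs_abs]
  have hgeom : Summable fun n : ℕ => C * ((n : ℝ) ^ 1 * |x| ^ n + |x| ^ n) :=
    ((summable_pow_mul_geometric_of_norm_lt_one 1 hx').add
      (summable_geometric_of_lt_one (abs_nonneg x) hx)).mul_left C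
  refine hgeom.of_nonneg_of_le (fun n => norm_nonneg _) fun n => ?_
  rw [norm_mul, norm_pow, Real.norm_eq_abs, Real.norm_eq_abs]
  calc |a n| * |x| ^ n ≤ C * (n + 1) * |x| ^ n := by gcongr; exact ha n
    _ = C * ((n : ℝ) ^ 1 * |x| ^ n + |x| ^ n) := by ring

theorem hasDerivAt_tsum_mul_pow (ha : ∀ n, |a n| ≤ C * (n + 1)) {y : ℝ} (hy : |y| < 1) :
    HasDerivAt (fun x => ∑' n, a n * x ^ n) (∑' n, a n * (n * y ^ (n - 1))) y := by
  obtain ⟨r, hyr, hr1⟩ := exists_between hy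
  have hr : 0 < r := (abs_nonneg y).trans_lt hyr
  have hC : 0 ≤ C := by simpa using (abs_nonneg (a 0)).trans (ha 0)
  have hu : Summable fun n : ℕ => 2 * C / r * ((n : ℝ) ^ 2 * r ^ n) :=
    (summable_pow_mul_geometric_of_norm_lt_one 2 (r := r)
      (by rwa [Real.norm_eq_abs, abs_of_pos hr])).mul_left _
  have hsum0 : Summable fun n => a n * (0 : ℝ) ^ n :=
    (summable_norm_mul_pow_of_abs_le ha (by simp)).of_norm
  refine hasDerivAt_tsum_of_isPreconnected (g := fun n x => a n * x ^ n)
    (g' := fun n x => a n * (n * x ^ (n - 1))) hu isOpen_Ioo isPreconnected_Ioo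
    (fun n x _ => (hasDerivAt_pow n x).const_mul (a n)) (fun n x hx => ?_)
    (Set.mem_Ioo.mpr ⟨neg_lt_zero.mpr hr, hr⟩) hsum0
    (Set.mem_Ioo.mpr (abs_lt.mp hyr))
  have hx : |x| ≤ r := abs_le.mpr ⟨hx.1.le, hx.2.le⟩
  rcases n with _ | n
  · simp
  rw [norm_mul, norm_mul, norm_pow, Real.norm_eq_abs, Real.norm_eq_abs, Real.norm_eq_abs,
    Nat.abs_cast, Nat.add_sub_cancel]
  push_cast
  calc |a (n + 1)| * ((n + 1) * |x| ^ n) ≤ C * (n + 1 + 1) * ((n + 1) * r ^ n) := by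
        gcongr
        exact_mod_cast ha (n + 1)
    _ ≤ C * (2 * (n + 1)) * ((n + 1) * r ^ n) := by gcongr; linarith
    _ = 2 * C / r * ((n + 1) ^ 2 * r ^ (n + 1)) := by field_simp; ring

-- The Cauchy product of `a` with the geometric series, delayed by `s + 1` steps.
theorem hasSum_sum_range_sub_mul_pow {x : ℝ} (ha : Summable fun n => ‖a n * x ^ n‖)
    (hx : |x| < 1) (s : ℕ) :
    HasSum (fun m => (∑ j ∈ range (m - s), a j) * x ^ m)
      (x ^ (s + 1) * (∑' n, a n * x ^ n) / (1 - x)) := by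
  have hgeom : Summable fun n => ‖x ^ n‖ := by
    simpa [norm_pow] using summable_geometric_of_lt_one (abs_nonneg x) hx
  have hcauchy := (hasSum_sum_range_mul_of_summable_norm ha hgeom).mul_left (x ^ (s + 1))
  rw [tsum_geometric_of_norm_lt_one (by rwa [Real.norm_eq_abs]), ← mul_assoc,
    ← div_eq_mul_inv] at hcauchy
  refine (hasSum_nat_add_iff' (s + 1)).mp ?_
  rw [sum_eq_zero fun i hi => ?_, sub_zero]
  · refine hcauchy.congr_fun fun m => ?_
    rw [show m + (s + 1) - s = m + 1 by omega, pow_add, sum_mul, mul_sum, mul_comm]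
    refine sum_congr rfl fun k hk => ?_
    rw [mul_assoc, pow_mul_pow_sub x (Nat.le_of_lt_succ (mem_range.mp hk))]
    ring
  · rw [Nat.sub_eq_zero_of_le (Nat.le_of_lt_succ (mem_range.mp hi))]; simp

theorem tsum_mul_pow_eq_pow_mul_tsum_shift {k : ℕ} (ha : ∀ n < k, a n = 0) (x : ℝ) :
    ∑' n, a n * x ^ n = x ^ k * ∑' n, a (n + k) * x ^ n := by
  rw [← tsum_mul_left, ← (add_left_injective k).tsum_eq fun n hn => ?_]
  · exact tsum_congr fun n => by ring
  · refine ⟨n - k, Nat.sub_add_cancel (not_lt.mp fun hnk => hn ?_)⟩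
    simp [ha n hnk]

end PowerSeries

noncomputable def integratingExponent (θ : ℕ) (t : ℝ) : ℝ := t + ∑ j ∈ Icc 1 (θ + 1), t ^ j / j

theorem hasDerivAt_integratingExponent (θ : ℕ) (t : ℝ) :
    HasDerivAt (integratingExponent θ) (1 + ∑ i ∈ range (θ + 1), t ^ i) t := by
  have hsum := HasDerivAt.fun_sum (u := Icc 1 (θ + 1)) fun j _ =>
    (hasDerivAt_pow j t).div_const (j : ℝ)
  refine ((hasDerivAt_id t).add hsum).congr_deriv ?_
  rw [← Ico_add_one_right_eq_Icc, sum_Ico_eq_sum_range, Nat.add_sub_cancel]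
  congr 1
  refine sum_congr rfl fun i _ => ?_
  field_simp
  simp

structure QuasiRandomRecurrence (θ : ℕ) (U : ℕ → ℝ) : Prop where
  eq_zero : ∀ n : ℕ, n ≤ θ + 1 → U n = 0
  eq_rec : ∀ n : ℕ, θ + 2 ≤ n →
    U n = 1 + (1 / ((n : ℝ) - θ - 1)) * ∑ k ∈ Icc θ (n - 2), (U k + U (n - k - 2))

namespace QuasiRandomRecurrence

variable {θ : ℕ} {U : ℕ → ℝ}

theorem nonneg_and_le (hU : QuasiRandomRecurrence θ U) (n : ℕ) : 0 ≤ U n ∧ U n ≤ n := by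
  induction n using Nat.strong_induction_on with | _ n ih => ?_
  rcases le_or_gt n (θ + 1) with hn | hn
  · simp [hU.eq_zero n hn]
  have hd : (0 : ℝ) < n - θ - 1 := by
    have : (θ : ℝ) + 2 ≤ n := by exact_mod_cast hn
    linarith
  have hcard : ((Icc θ (n - 2)).card : ℝ) = n - θ - 1 := by
    rw [Nat.card_Icc, show n - 2 + 1 - θ = n - (θ + 1) by omega, Nat.cast_sub hn.le]
    push_cast
    ring
  have hterm : ∀ k ∈ Icc θ (n - 2), 0 ≤ U k + U (n - k - 2) ∧ U k + U (n - k - 2) ≤ n - 1 := by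
    intro k hk
    have hk := mem_Icc.mp hk
    obtain ⟨h1, h2⟩ := ih k (by omega)
    obtain ⟨h3, h4⟩ := ih (n - k - 2) (by omega)
    have : (k : ℝ) + (n - k - 2 : ℕ) + 1 ≤ n := by
      exact_mod_cast (by omega : k + (n - k - 2) + 1 ≤ n)
    constructor <;> linarith
  have hsum_nonneg := sum_nonneg fun k hk => (hterm k hk).1
  have hsum_le : ∑ k ∈ Icc θ (n - 2), (U k + U (n - k - 2)) ≤ (n - θ - 1) * (n - 1) := by
    rw [← hcard, ← nsmul_eq_mul]
    exact sum_le_card_nsmul _ _ _ fun k hk => (hterm k hk).2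
  rw [hU.eq_rec n hn, one_div_mul_eq_div]
  constructor
  · positivity
  · rw [← le_sub_iff_add_le', div_le_iff₀ hd]
    linarith

theorem shifted_recurrence (hU : QuasiRandomRecurrence θ U) (m : ℕ) :
    (m : ℝ) * U (m + (θ + 1)) =
      m + ∑ j ∈ range (m - 1), U (j + (θ + 1)) + ∑ j ∈ range (m - (θ + 1)), U (j + (θ + 1)) := by
  rcases Nat.eq_zero_or_pos m with rfl | hm
  · simp
  have hvanish : ∀ k < θ + 1, U k = 0 := fun k hk => hU.eq_zero k hk.le
  have hsum : ∑ k ∈ Icc θ (m + (θ + 1) - 2), (U k + U (m + (θ + 1) - k - 2)) =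
      ∑ k ∈ range m, U (k + θ) + ∑ k ∈ range m, U (m - 1 - k) := by
    rw [← Ico_add_one_right_eq_Icc, sum_Ico_eq_sum_range, sum_add_distrib,
      show m + (θ + 1) - 2 + 1 - θ = m by omega]
    congr 1 <;> refine sum_congr rfl fun k hk => congrArg U ?_
    · ring
    · have := mem_range.mp hk; omega
  rw [hU.eq_rec _ (by omega), hsum, sum_range_reflect (fun k => U k),
    sum_range_eq_sum_range_sub_of_eq_zero (s := 1) (fun k hk => hvanish (k + θ) (by omega)),
    sum_range_eq_sum_range_sub_of_eq_zero hvanish]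
  simp only [add_assoc, add_comm 1 θ]
  rw [show ((m + (θ + 1) : ℕ) : ℝ) - θ - 1 = m by push_cast; ring]
  field_simp

theorem abs_shift_le (hU : QuasiRandomRecurrence θ U) (m : ℕ) :
    |U (m + (θ + 1))| ≤ (θ + 1) * (m + 1) := by
  obtain ⟨h1, h2⟩ := hU.nonneg_and_le (m + (θ + 1))
  rw [abs_of_nonneg h1]
  push_cast at h2
  nlinarith

theorem hasSum_shift_mul_pow (hU : QuasiRandomRecurrence θ U) {y : ℝ} (hy : |y| < 1) :
    HasSum (fun m : ℕ => m * U (m + (θ + 1)) * y ^ m)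
      (y / (1 - y) ^ 2 + y ^ 2 * (∑' m, U (m + (θ + 1)) * y ^ m) / (1 - y) +
        y ^ (θ + 2) * (∑' m, U (m + (θ + 1)) * y ^ m) / (1 - y)) := by
  have ha := summable_norm_mul_pow_of_abs_le hU.abs_shift_le hy
  have hsum := ((hasSum_coe_mul_geometric_of_norm_lt_one (by rwa [Real.norm_eq_abs])).add
    (hasSum_sum_range_sub_mul_pow ha hy 1)).add (hasSum_sum_range_sub_mul_pow ha hy (θ + 1))
  exact hsum.congr_fun fun m => by rw [hU.shifted_recurrence]; ring

theorem hasDerivAt_tsum_shift (hU : QuasiRandomRecurrence θ U) {y : ℝ} (hy : |y| < 1) :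
    HasDerivAt (fun x => ∑' m, U (m + (θ + 1)) * x ^ m)
      (1 / (1 - y) ^ 2 + (y + y ^ (θ + 1)) * (∑' m, U (m + (θ + 1)) * y ^ m) / (1 - y)) y := by
  refine (hasDerivAt_tsum_mul_pow hU.abs_shift_le hy).congr_deriv ?_
  rcases eq_or_ne y 0 with rfl | hy0
  · rw [tsum_eq_single 1 fun m hm => ?_]
    · simpa using hU.shifted_recurrence 1
    · rcases m with _ | m
      · simp
      · simp [show m ≠ 0 by omega]
  refine mul_left_cancel₀ hy0 ?_
  have h1y : 1 - y ≠ 0 := by linarith [le_abs_self y]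
  have hterm : ∀ m : ℕ,
      y * (U (m + (θ + 1)) * (m * y ^ (m - 1))) = m * U (m + (θ + 1)) * y ^ m := by
    rintro (_ | m)
    · simp
    · rw [Nat.add_sub_cancel, pow_succ]; ring
  rw [← tsum_mul_left, tsum_congr hterm, (hU.hasSum_shift_mul_pow hy).tsum_eq]
  field_simp
  ring

theorem hasDerivAt_exp_mul_tsum_shift (hU : QuasiRandomRecurrence θ U) {y : ℝ} (hy : |y| < 1) :
    HasDerivAt
      (fun x => Real.exp (integratingExponent θ x) * ((1 - x) ^ 2 * ∑' m, U (m + (θ + 1)) * x ^ m))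
      (Real.exp (integratingExponent θ y)) y := by
  have h1y : 1 - y ≠ 0 := by linarith [le_abs_self y]
  have hgeom := geom_sum_mul y (θ + 1)
  refine ((hasDerivAt_integratingExponent θ y).exp.fun_mul
    ((((hasDerivAt_id' y).const_sub 1).fun_pow 2).fun_mul
      (hU.hasDerivAt_tsum_shift hy))).congr_deriv ?_
  set G := ∑' m, U (m + (θ + 1)) * y ^ m
  field_simp
  linear_combination (y - 1) * G * hgeom

end QuasiRandomRecurrence

theorem quasi_random_gf_closed_form_general (θ : ℕ) (U : ℕ → ℝ)
    (h0 : ∀ n : ℕ, n ≤ θ + 1 → U n = 0)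
    (hrec : ∀ n : ℕ, θ + 2 ≤ n →
      U n = 1 + (1 / ((n : ℝ) - θ - 1)) *
        ∑ k ∈ Finset.Icc θ (n - 2), (U k + U (n - k - 2))) :
    ∀ z : ℝ, 0 ≤ z → z < 1 →
      ∑' n : ℕ, U n * z ^ n
        = (z ^ (θ + 1) / (1 - z) ^ 2)
          * Real.exp (-z - ∑ j ∈ Finset.Icc 1 (θ + 1), z ^ j / (j : ℝ))
          * ∫ t in (0 : ℝ)..z,
              Real.exp (t + ∑ j ∈ Finset.Icc 1 (θ + 1), t ^ j / (j : ℝ)) := by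
  intro z hz0 hz1
  have hU : QuasiRandomRecurrence θ U := ⟨h0, hrec⟩
  have hcont : Continuous fun t => Real.exp (integratingExponent θ t) := by
    unfold integratingExponent
    fun_prop
  have hderiv : ∀ y ∈ Set.uIcc 0 z, HasDerivAt _ _ y := fun y hy => by
    rw [Set.uIcc_of_le hz0] at hy
    exact hU.hasDerivAt_exp_mul_tsum_shift (by rw [abs_of_nonneg hy.1]; linarith [hy.2])
  have hFTC := intervalIntegral.integral_eq_sub_of_hasDerivAt hderiv (hcont.intervalIntegrable 0 z)
  have h1z : 1 - z ≠ 0 := by linarith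
  rw [tsum_mul_pow_eq_pow_mul_tsum_shift fun n hn => h0 n hn.le, ← neg_add']
  show _ = _ * Real.exp (-integratingExponent θ z) *
    ∫ t in (0 : ℝ)..z, Real.exp (integratingExponent θ t)
  have hG0 : ∑' m, U (m + (θ + 1)) * (0 : ℝ) ^ m = 0 := by
    rw [tsum_eq_single 0 fun m hm => by simp [hm]]
    simp [h0]
  rw [hFTC, hG0, mul_zero, mul_zero, sub_zero, Real.exp_neg]
  field_simp

/-- Fix `θ ≥ 1` and let `(U_n)` be the sequence with `U_n = 0` for `n ≤ θ + 1` and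
`U_n = 1 + (1/(n − θ − 1)) Σ_{k=θ}^{n−2} (U_k + U_{n−k−2})` for `n ≥ θ + 2`. Then for
`0 ≤ z < 1`:
`Σ U_n zⁿ = (z^{θ+1}/(1−z)²) · exp(−z − Σ_{j=1}^{θ+1} z^j/j) ·
∫₀^z exp(t + Σ_{j=1}^{θ+1} t^j/j) dt`. -/
theorem quasi_random_gf_closed_form (θ : ℕ) (hθ : 1 ≤ θ) (U : ℕ → ℝ)
    (h0 : ∀ n : ℕ, n ≤ θ + 1 → U n = 0)
    (hrec : ∀ n : ℕ, θ + 2 ≤ n →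
      U n = 1 + (1 / ((n : ℝ) - θ - 1)) *
        ∑ k ∈ Finset.Icc θ (n - 2), (U k + U (n - k - 2))) :
    ∀ z : ℝ, 0 ≤ z → z < 1 →
      ∑' n : ℕ, U n * z ^ n
        = (z ^ (θ + 1) / (1 - z) ^ 2)
          * Real.exp (-z - ∑ j ∈ Finset.Icc 1 (θ + 1), z ^ j / (j : ℝ))
          * ∫ t in (0 : ℝ)..z,
              Real.exp (t + ∑ j ∈ Finset.Icc 1 (θ + 1), t ^ j / (j : ℝ)) :=
  quasi_random_gf_closed_form_general θ U h0 hrec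
end

section
/- Fix an integer θ ≥ 1 and define the sequence (U_n)_{n≥0} by U_n = 0 for 0 ≤ n ≤ θ + 1, and U_n = 1 + (1/(n − θ − 1)) · Σ_{k=θ}^{n−2} (U_k + U_{n−k−2}) for n ≥ θ + 2. Then lim_{n→∞} U_n/n = K_θ, where K_θ = e^{−1−H_{θ+1}} · ∫₀¹ exp(t + Σ_{j=1}^{θ+1} t^j/j) dt and H_{θ+1} = Σ_{j=1}^{θ+1} 1/j is the (θ+1)-st harmonic number. (In particular K_1 ≈ 0.340633, so the expected number of base pairs of a quasi-random saturated structure with θ = 1 is asymptotically 0.340633 · n.) -/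
/-!
Write `Q(t) = t + ∑_{j=1}^{θ+1} t^j / j` and let `g_m` be the second difference of `U` centred at `m + θ`,
so that `∑_{m ≤ N} g_m = U (N + θ + 1) - U (N + θ)`. Differencing the recurrence for `U` twice turns
it into `(n + 1) g_{n+1} = [n = 0] - ∑_{j ≤ θ} q_j g_{n-j}` with `Q' = ∑_{j ≤ θ} q_j x^j`: the `g_m`
are the Taylor coefficients of the solution `G = e^{-Q} ∫_0^x e^Q` of `G' + Q' G = 1`, `G 0 = 0`.
This recurrence forces `g_m = O(1/m)`, so the truncations `P_N` of `G` solve the equation up to an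
error `O(1/N)` on `[0, 1]`, and the mean value theorem applied to `e^Q P_N - ∫_0^x e^Q` shows that
the partial sums `P_N(1)` tend to `G(1) = K_θ`. Hence the increments of `U` tend to `K_θ`, and so
does `U_n / n` by Cesàro.
-/

open Finset Filter Topology Real
open scoped fwdDiff

namespace QuasiRandom

theorem tendsto_div_of_tendsto_fwdDiff {u : ℕ → ℝ} {l : ℝ} (h : Tendsto (Δ_[1] u) atTop (𝓝 l)) :
    Tendsto (fun n : ℕ => u n / n) atTop (𝓝 l) := by
  have hmean : Tendsto (fun n : ℕ => (n : ℝ)⁻¹ * (u n - u 0)) atTop (𝓝 l) := by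
    simpa only [fwdDiff, sum_range_sub] using h.cesaro
  have hinit : Tendsto (fun n : ℕ => u 0 / n) atTop (𝓝 0) := tendsto_const_div_atTop_nhds_zero_nat _
  refine (add_zero l ▸ hmean.add hinit).congr fun n => ?_
  rw [inv_mul_eq_div, ← add_div, sub_add_cancel]

/-- The coefficient form of `y' + (∑_{j ≤ d} q_j x ^ j) y = 1`; with `g 0 = 0`, the Taylor
coefficients of its solution with `y 0 = 0`. -/
def LinearODECoeffs (d : ℕ) (q g : ℕ → ℝ) : Prop :=
  ∀ n : ℕ, (n + 1 : ℝ) * g (n + 1) = (if n = 0 then 1 else 0) - ∑ j ∈ range (d + 1), q j * g (n - j)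

section LinearODECoeffs

variable {d : ℕ} {q g : ℕ → ℝ}

lemma LinearODECoeffs.succ_mul_abs_le (hg : LinearODECoeffs d q g)
    {n : ℕ} {D : ℝ} (hD : ∀ k ≤ n, |g k| ≤ D) :
    (n + 1 : ℝ) * |g (n + 1)| ≤ 1 + (∑ j ∈ range (d + 1), |q j|) * D := by
  have hite : |(if n = 0 then 1 else 0 : ℝ)| ≤ 1 := by split_ifs <;> norm_num
  have hsum : |∑ j ∈ range (d + 1), q j * g (n - j)| ≤ (∑ j ∈ range (d + 1), |q j|) * D := by
    rw [sum_mul]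
    refine (abs_sum_le_sum_abs _ _).trans (sum_le_sum fun j _ => ?_)
    rw [abs_mul]
    exact mul_le_mul_of_nonneg_left (hD _ (Nat.sub_le n j)) (abs_nonneg _)
  calc (n + 1 : ℝ) * |g (n + 1)| = |(n + 1 : ℝ) * g (n + 1)| := by
        rw [abs_mul, abs_of_pos (by positivity : (0 : ℝ) < n + 1)]
    _ ≤ _ := by rw [hg n]; exact (abs_sub _ _).trans (add_le_add hite hsum)

lemma LinearODECoeffs.exists_forall_abs_le (hg : LinearODECoeffs d q g) :
    ∃ D, ∀ m, |g m| ≤ D := by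
  set A := ∑ j ∈ range (d + 1), |q j|
  have hA : 0 ≤ A := sum_nonneg fun j _ => abs_nonneg _
  obtain ⟨M, hM⟩ := exists_nat_ge (A + 1)
  set D := ∑ k ∈ range (M + 1), |g k| + 1
  have hD : 1 ≤ D := le_add_of_nonneg_left (sum_nonneg fun k _ => abs_nonneg _)
  refine ⟨D, fun m => ?_⟩
  induction m using Nat.strong_induction_on with
  | _ m ih =>
    rcases le_or_gt m M with hm | hm
    · have := single_le_sum (f := fun k => |g k|) (fun k _ => abs_nonneg _)
        (mem_range.2 (Nat.lt_succ_of_le hm))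
      linarith
    · obtain ⟨n, rfl⟩ : ∃ n, m = n + 1 := ⟨m - 1, by omega⟩
      have hn : A + 1 ≤ (n + 1 : ℝ) := hM.trans (by exact_mod_cast hm.le)
      refine le_of_mul_le_mul_left ?_ (by positivity : (0 : ℝ) < n + 1)
      calc (n + 1 : ℝ) * |g (n + 1)| ≤ 1 + A * D := hg.succ_mul_abs_le fun k hk => ih k (by omega)
        _ ≤ (A + 1) * D := by nlinarith
        _ ≤ (n + 1) * D := by gcongr

lemma LinearODECoeffs.exists_forall_natCast_mul_abs_le (hg : LinearODECoeffs d q g) :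
    ∃ C, ∀ m : ℕ, m * |g m| ≤ C := by
  obtain ⟨D, hD⟩ := hg.exists_forall_abs_le
  refine ⟨1 + (∑ j ∈ range (d + 1), |q j|) * D, fun m => ?_⟩
  rcases m with _ | n
  · have : 0 ≤ D := (abs_nonneg _).trans (hD 0)
    simp only [CharP.cast_eq_zero, zero_mul]
    positivity
  · exact_mod_cast hg.succ_mul_abs_le fun k _ => hD k

def partialSeries (g : ℕ → ℝ) (N : ℕ) (x : ℝ) : ℝ := ∑ m ∈ range N, g m * x ^ m

lemma hasDerivAt_partialSeries_succ (g : ℕ → ℝ) (N : ℕ) (x : ℝ) :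
    HasDerivAt (partialSeries g (N + 1)) (∑ n ∈ range N, (n + 1 : ℝ) * g (n + 1) * x ^ n) x := by
  have h := HasDerivAt.fun_sum (u := range (N + 1)) fun m _ => (hasDerivAt_pow m x).const_mul (g m)
  refine h.congr_deriv ?_
  rw [sum_range_succ']
  simp only [CharP.cast_eq_zero, zero_mul, mul_zero, add_zero, Nat.cast_add, Nat.cast_one,
    Nat.add_sub_cancel]
  exact sum_congr rfl fun n _ => by ring

lemma sum_range_mul_pow_sub {f : ℕ → ℝ} (hf : f 0 = 0) (K j : ℕ) (x : ℝ) :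
    ∑ n ∈ range K, f (n - j) * x ^ n = x ^ j * ∑ m ∈ range (K - j), f m * x ^ m := by
  rcases le_or_gt j K with hjK | hKj
  · obtain ⟨L, rfl⟩ := Nat.exists_eq_add_of_le hjK
    rw [sum_range_add, Nat.add_sub_cancel_left, mul_sum,
      sum_eq_zero fun n hn => by rw [Nat.sub_eq_zero_of_le (mem_range.1 hn).le, hf, zero_mul],
      zero_add]
    exact sum_congr rfl fun m _ => by rw [Nat.add_sub_cancel_left, pow_add]; ring
  · rw [Nat.sub_eq_zero_of_le hKj.le, sum_range_zero, mul_zero]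
    exact sum_eq_zero fun n hn => by
      rw [Nat.sub_eq_zero_of_le ((mem_range.1 hn).le.trans hKj.le), hf, zero_mul]

lemma LinearODECoeffs.sum_range_succ_mul_eq_one_sub (hg : LinearODECoeffs d q g) (hg0 : g 0 = 0)
    {N : ℕ} (hN : N ≠ 0) (x : ℝ) :
    ∑ n ∈ range N, (n + 1 : ℝ) * g (n + 1) * x ^ n =
      1 - ∑ j ∈ range (d + 1), q j * x ^ j * partialSeries g (N - j) x := by
  simp only [hg _, sub_mul, sum_sub_distrib, ite_mul, one_mul, zero_mul, sum_ite_eq',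
    mem_range, Nat.pos_of_ne_zero hN, if_true, pow_zero, sum_mul]
  rw [sum_comm]
  congr 1
  refine sum_congr rfl fun j _ => ?_
  simp only [partialSeries, mul_assoc, ← mul_sum, ← sum_range_mul_pow_sub hg0]

lemma abs_partialSeries_add_sub_le {C : ℝ} (hC : ∀ m : ℕ, m * |g m| ≤ C) {x : ℝ} (hx : |x| ≤ 1)
    {M : ℕ} (hM : 0 < M) (k : ℕ) :
    |partialSeries g (M + k) x - partialSeries g M x| ≤ k * C / M := by
  have hterm : ∀ m ∈ Ico M (M + k), |g m * x ^ m| ≤ C / M := fun m hm => by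
    have hMm : (M : ℝ) ≤ m := by exact_mod_cast (mem_Ico.1 hm).1
    have hMpos : (0 : ℝ) < M := by exact_mod_cast hM
    rw [abs_mul, abs_pow, le_div_iff₀ hMpos]
    calc |g m| * |x| ^ m * M ≤ |g m| * 1 * m := by
          gcongr
          exact pow_le_one₀ (abs_nonneg x) hx
      _ ≤ C := by linarith [hC m]
  calc |partialSeries g (M + k) x - partialSeries g M x|
      = |∑ m ∈ Ico M (M + k), g m * x ^ m| := by
        rw [partialSeries, partialSeries, sum_Ico_eq_sub _ (Nat.le_add_right M k)]
    _ ≤ ∑ m ∈ Ico M (M + k), C / M := (abs_sum_le_sum_abs _ _).trans (sum_le_sum hterm)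
    _ = k * C / M := by rw [sum_const, Nat.card_Ico, Nat.add_sub_cancel_left, nsmul_eq_mul,
        mul_div_assoc]

lemma abs_sum_mul_partialSeries_sub_le {C : ℝ} (hC : ∀ m : ℕ, m * |g m| ≤ C) {x : ℝ}
    (hx : |x| ≤ 1) {N : ℕ} (hN : d < N) :
    |∑ j ∈ range (d + 1), q j * x ^ j * (partialSeries g (N + 1) x - partialSeries g (N - j) x)|
      ≤ (∑ j ∈ range (d + 1), |q j|) * ((d + 1) * C / (N - d)) := by
  have hC0 : 0 ≤ C := by simpa using hC 0
  rw [sum_mul]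
  refine (abs_sum_le_sum_abs _ _).trans (sum_le_sum fun j hj => ?_)
  have hjd : j ≤ d := Nat.lt_succ_iff.1 (mem_range.1 hj)
  have hNj : (N : ℝ) - d ≤ ((N - j : ℕ) : ℝ) := by
    rw [Nat.cast_sub (hjd.trans hN.le)]
    gcongr
  have hNd : (0 : ℝ) < N - d := sub_pos.2 (by exact_mod_cast hN)
  have hdiff := abs_partialSeries_add_sub_le hC hx (M := N - j) (by omega) (j + 1)
  rw [show N - j + (j + 1) = N + 1 by omega] at hdiff
  rw [abs_mul, abs_mul, abs_pow]
  calc |q j| * |x| ^ j * |partialSeries g (N + 1) x - partialSeries g (N - j) x|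
      ≤ |q j| * 1 * (((j + 1 : ℕ) : ℝ) * C / ((N - j : ℕ) : ℝ)) := by
        gcongr
        exact pow_le_one₀ (abs_nonneg x) hx
    _ ≤ |q j| * ((d + 1) * C / (N - d)) := by
        rw [mul_one]
        gcongr
        exact_mod_cast Nat.succ_le_succ hjd

lemma LinearODECoeffs.abs_exp_mul_sum_range_sub_integral_le (hg : LinearODECoeffs d q g)
    {Q : ℝ → ℝ} (hQ : ∀ x, HasDerivAt Q (∑ j ∈ range (d + 1), q j * x ^ j) x) (hg0 : g 0 = 0)
    {B C : ℝ} (hB : ∀ x ∈ Set.Icc (0 : ℝ) 1, exp (Q x) ≤ B) (hC : ∀ m : ℕ, m * |g m| ≤ C)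
    {N : ℕ} (hN : d < N) :
    |exp (Q 1) * ∑ m ∈ range (N + 1), g m - ∫ t in (0 : ℝ)..1, exp (Q t)|
      ≤ B * ((∑ j ∈ range (d + 1), |q j|) * ((d + 1) * C / (N - d))) := by
  have hcont : Continuous fun t => exp (Q t) :=
    continuous_exp.comp (continuous_iff_continuousAt.2 fun x => (hQ x).continuousAt)
  set P := partialSeries g (N + 1)
  set Φ : ℝ → ℝ := fun x => exp (Q x) * P x - ∫ t in (0 : ℝ)..x, exp (Q t)
  set E : ℝ → ℝ := fun x => ∑ j ∈ range (d + 1), q j * x ^ j * (P x - partialSeries g (N - j) x)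
  -- `Φ' = e^Q (P' + Q' P - 1)`, and the recurrence cancels all but the top coefficients
  have hΦ : ∀ x, HasDerivAt Φ (exp (Q x) * E x) x := fun x => by
    refine (((hQ x).exp.mul (hasDerivAt_partialSeries_succ g N x)).sub
      (hcont.integral_hasStrictDerivAt 0 x).hasDerivAt).congr_deriv ?_
    rw [hg.sum_range_succ_mul_eq_one_sub hg0 (by omega : N ≠ 0)]
    simp only [E, mul_sub, sum_sub_distrib, ← sum_mul]
    ring
  have hbound : ∀ x ∈ Set.Ico (0 : ℝ) 1,
      ‖exp (Q x) * E x‖ ≤ B * ((∑ j ∈ range (d + 1), |q j|) * ((d + 1) * C / (N - d))) :=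
    fun x hx => by
      rw [Real.norm_eq_abs, abs_mul, abs_exp]
      exact mul_le_mul (hB x (Set.Ico_subset_Icc_self hx))
        (abs_sum_mul_partialSeries_sub_le hC (abs_le.2 ⟨by linarith [hx.1], hx.2.le⟩) hN)
        (abs_nonneg _) ((exp_pos _).le.trans (hB 0 (Set.left_mem_Icc.2 zero_le_one)))
  have hP0 : P 0 = 0 := by simp [P, partialSeries, sum_range_succ', hg0]
  have hP1 : P 1 = ∑ m ∈ range (N + 1), g m := by simp [P, partialSeries]
  simpa [Φ, hP0, hP1] using norm_image_sub_le_of_norm_deriv_le_segment'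
    (fun x _ => (hΦ x).hasDerivWithinAt) hbound 1 (Set.right_mem_Icc.2 zero_le_one)

theorem LinearODECoeffs.tendsto_sum_range (hg : LinearODECoeffs d q g) {Q : ℝ → ℝ}
    (hQ : ∀ x, HasDerivAt Q (∑ j ∈ range (d + 1), q j * x ^ j) x) (hg0 : g 0 = 0) :
    Tendsto (fun N => ∑ m ∈ range N, g m) atTop
      (𝓝 (exp (-Q 1) * ∫ t in (0 : ℝ)..1, exp (Q t))) := by
  have hcont : Continuous fun t => exp (Q t) :=
    continuous_exp.comp (continuous_iff_continuousAt.2 fun x => (hQ x).continuousAt)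
  obtain ⟨B, hB⟩ := (isCompact_Icc (a := (0 : ℝ)) (b := 1)).exists_bound_of_continuousOn
    hcont.continuousOn
  obtain ⟨C, hC⟩ := hg.exists_forall_natCast_mul_abs_le
  have hbound : Tendsto (fun N : ℕ =>
      B * ((∑ j ∈ range (d + 1), |q j|) * ((d + 1) * C / (N - d)))) atTop (𝓝 0) := by
    have h := (tendsto_const_nhds (x := ((d + 1) * C : ℝ))).div_atTop
      (tendsto_atTop_add_const_right _ (-(d : ℝ)) tendsto_natCast_atTop_atTop)
    simpa [sub_eq_add_neg] using (h.const_mul (∑ j ∈ range (d + 1), |q j|)).const_mul B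
  have hscaled : Tendsto (fun N => exp (Q 1) * ∑ m ∈ range (N + 1), g m) atTop
      (𝓝 (∫ t in (0 : ℝ)..1, exp (Q t))) := by
    refine tendsto_iff_norm_sub_tendsto_zero.2 (squeeze_zero_norm' ?_ hbound)
    filter_upwards [eventually_gt_atTop d] with N hN
    rw [norm_norm]
    exact hg.abs_exp_mul_sum_range_sub_integral_le hQ hg0
      (fun x hx => by simpa using hB x hx) hC hN
  rw [← tendsto_add_atTop_iff_nat 1]
  refine (hscaled.const_mul (exp (-Q 1))).congr fun N => ?_
  rw [← mul_assoc, ← exp_add, neg_add_cancel, exp_zero, one_mul]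

end LinearODECoeffs

section SaturatedStructure

def BasePairRecurrence (θ : ℕ) (U : ℕ → ℝ) : Prop :=
  ∀ n : ℕ, θ + 2 ≤ n →
    U n = 1 + (1 / ((n : ℝ) - θ - 1)) * ∑ k ∈ Icc θ (n - 2), (U k + U (n - k - 2))

variable {θ : ℕ} {U : ℕ → ℝ}

lemma fwdDiff_eq_zero_of_le (h0 : ∀ n : ℕ, n ≤ θ + 1 → U n = 0) {k : ℕ} (hk : k ≤ θ) :
    Δ_[1] U k = 0 := by
  rw [fwdDiff, h0 k (by omega), h0 (k + 1) (by omega), sub_zero]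

lemma natCast_mul_sub_one_eq_sum_range (h0 : ∀ n : ℕ, n ≤ θ + 1 → U n = 0)
    (hrec : BasePairRecurrence θ U) (t : ℕ) :
    (t : ℝ) * (U (t + θ + 1) - 1) = ∑ k ∈ range (t + θ), U k + ∑ k ∈ range t, U k := by
  rcases t with _ | s
  · simp only [CharP.cast_eq_zero, zero_mul, zero_add, sum_range_zero, add_zero]
    exact (sum_eq_zero fun k hk => h0 k (by simp at hk; omega)).symm
  have hleft : ∑ k ∈ Icc θ (s + θ), U k = ∑ k ∈ range (s + 1 + θ), U k :=
    sum_subset (fun k hk => by simp at hk ⊢; omega) fun k hk hk' => h0 k (by simp at hk hk'; omega)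
  have hright : ∑ k ∈ Icc θ (s + θ), U (s + 1 + θ + 1 - k - 2) = ∑ k ∈ range (s + 1), U k := by
    rw [← Ico_add_one_right_eq_Icc, range_eq_Ico,
      sum_congr rfl fun k _ => congrArg U (by omega : s + 1 + θ + 1 - k - 2 = s + θ - k),
      sum_Ico_reflect _ _ le_rfl, Nat.sub_self, show s + θ + 1 - θ = s + 1 by omega]
  have h := hrec (s + 1 + θ + 1) (by omega)
  rw [show s + 1 + θ + 1 - 2 = s + θ by omega, sum_add_distrib, hleft, hright] at h
  have hden : ((s + 1 + θ + 1 : ℕ) : ℝ) - θ - 1 = s + 1 := by push_cast; ring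
  rw [h, hden]
  push_cast
  field_simp
  ring

lemma succ_mul_fwdDiff_add_fwdDiff (h0 : ∀ n : ℕ, n ≤ θ + 1 → U n = 0)
    (hrec : BasePairRecurrence θ U) (t : ℕ) :
    (t + 1 : ℝ) * Δ_[1] U (t + θ + 1) + Δ_[1] U (t + θ) = 1 + U t := by
  have ht := natCast_mul_sub_one_eq_sum_range h0 hrec t
  have hsucc := natCast_mul_sub_one_eq_sum_range h0 hrec (t + 1)
  rw [show t + 1 + θ = t + θ + 1 by omega, sum_range_succ, sum_range_succ] at hsucc
  simp only [fwdDiff]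
  push_cast at hsucc
  linear_combination hsucc - ht

def shiftedSecondDiff (θ : ℕ) (U : ℕ → ℝ) (m : ℕ) : ℝ := Δ_[1] U (m + θ) - Δ_[1] U (m + θ - 1)

lemma shiftedSecondDiff_zero (h0 : ∀ n : ℕ, n ≤ θ + 1 → U n = 0) : shiftedSecondDiff θ U 0 = 0 := by
  rw [shiftedSecondDiff, fwdDiff_eq_zero_of_le h0 (by omega), fwdDiff_eq_zero_of_le h0 (by omega),
    sub_zero]

lemma sum_range_succ_shiftedSecondDiff (h0 : ∀ n : ℕ, n ≤ θ + 1 → U n = 0) (N : ℕ) :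
    ∑ m ∈ range (N + 1), shiftedSecondDiff θ U m = Δ_[1] U (N + θ) := by
  induction N with
  | zero =>
    rw [sum_range_one, shiftedSecondDiff, fwdDiff_eq_zero_of_le h0 (k := 0 + θ - 1) (by omega),
      sub_zero]
  | succ N ih =>
    rw [sum_range_succ, ih, shiftedSecondDiff, show N + 1 + θ - 1 = N + θ by omega]
    ring

lemma sum_range_shiftedSecondDiff_sub (h0 : ∀ n : ℕ, n ≤ θ + 1 → U n = 0) (n : ℕ) :
    ∑ j ∈ range (θ + 1), shiftedSecondDiff θ U (n - j) = Δ_[1] U (n + θ) - Δ_[1] U (n - 1) := by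
  have hterm : ∀ j ∈ range (θ + 1), shiftedSecondDiff θ U (n - j) =
      Δ_[1] U (n + θ - j) - Δ_[1] U (n + θ - (j + 1)) := fun j hj => by
    rw [shiftedSecondDiff]
    rcases le_or_gt j n with hjn | hnj
    · rw [show n - j + θ = n + θ - j by omega, Nat.sub_sub]
    · have hj : j ≤ θ := Nat.lt_succ_iff.1 (mem_range.1 hj)
      simp only [fwdDiff_eq_zero_of_le h0 (by omega : n - j + θ ≤ θ),
        fwdDiff_eq_zero_of_le h0 (by omega : n - j + θ - 1 ≤ θ),
        fwdDiff_eq_zero_of_le h0 (by omega : n + θ - j ≤ θ),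
        fwdDiff_eq_zero_of_le h0 (by omega : n + θ - (j + 1) ≤ θ)]
  rw [sum_congr rfl hterm, sum_range_sub' (fun j => Δ_[1] U (n + θ - j)),
    Nat.sub_zero, show n + θ - (θ + 1) = n - 1 by omega]

lemma linearODECoeffs_shiftedSecondDiff (h0 : ∀ n : ℕ, n ≤ θ + 1 → U n = 0)
    (hrec : BasePairRecurrence θ U) :
    LinearODECoeffs θ (fun j => if j = 0 then 2 else 1) (shiftedSecondDiff θ U) := by
  intro n
  have hweights : ∑ j ∈ range (θ + 1), (if j = 0 then 2 else 1) * shiftedSecondDiff θ U (n - j) =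
      shiftedSecondDiff θ U n + ∑ j ∈ range (θ + 1), shiftedSecondDiff θ U (n - j) := by
    simp only [sum_range_succ' _ θ, Nat.succ_ne_zero, if_false, if_true, one_mul, Nat.sub_zero]
    ring
  rw [hweights, sum_range_shiftedSecondDiff_sub h0]
  rcases n with _ | t
  · have h := succ_mul_fwdDiff_add_fwdDiff h0 hrec 0
    simp only [zero_add, fwdDiff_eq_zero_of_le h0 le_rfl, h0 0 (by omega), add_zero,
      Nat.cast_zero, one_mul] at h
    simp only [shiftedSecondDiff, zero_add, Nat.zero_sub, if_true, add_comm 1 θ, Nat.add_sub_cancel,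
      h, fwdDiff_eq_zero_of_le h0 le_rfl, fwdDiff_eq_zero_of_le h0 (Nat.sub_le θ 1),
      fwdDiff_eq_zero_of_le h0 (Nat.zero_le θ)]
    norm_num
  · have ht := succ_mul_fwdDiff_add_fwdDiff h0 hrec t
    have hsucc := succ_mul_fwdDiff_add_fwdDiff h0 hrec (t + 1)
    have hΔ : Δ_[1] U t = U (t + 1) - U t := rfl
    rw [show t + 1 + θ + 1 = t + θ + 1 + 1 by omega, show t + 1 + θ = t + θ + 1 by omega] at hsucc
    simp only [shiftedSecondDiff, show t + 1 + 1 + θ = t + θ + 1 + 1 by omega,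
      show t + 1 + θ = t + θ + 1 by omega,
      Nat.add_sub_cancel, Nat.succ_ne_zero, if_false]
    push_cast at hsucc ⊢
    linear_combination hsucc - ht - hΔ

lemma hasDerivAt_add_sum_pow_div (θ : ℕ) (x : ℝ) :
    HasDerivAt (fun t : ℝ => t + ∑ j ∈ Icc 1 (θ + 1), t ^ j / j)
      (∑ j ∈ range (θ + 1), (if j = 0 then 2 else 1) * x ^ j) x := by
  refine ((hasDerivAt_id x).add (HasDerivAt.fun_sum fun j _ =>
    (hasDerivAt_pow j x).div_const (j : ℝ))).congr_deriv ?_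
  rw [← Ico_add_one_right_eq_Icc, ← sum_Ico_add' _ 0 (θ + 1) 1, ← range_eq_Ico,
    sum_range_succ', sum_range_succ' (fun j => (if j = 0 then (2 : ℝ) else 1) * x ^ j)]
  have hcancel : ∀ i ∈ range θ, ((i + 1 + 1 : ℕ) : ℝ) * x ^ (i + 1) / ((i + 1 + 1 : ℕ) : ℝ) =
      x ^ (i + 1) := fun i _ => mul_div_cancel_left₀ _ (by positivity)
  simp only [Nat.add_sub_cancel, sum_congr rfl hcancel, Nat.succ_ne_zero, if_false, if_true,
    one_mul]
  norm_num
  ring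

end SaturatedStructure

end QuasiRandom

open QuasiRandom

theorem quasi_random_expected_base_pairs_general (θ : ℕ) (U : ℕ → ℝ)
    (h0 : ∀ n : ℕ, n ≤ θ + 1 → U n = 0)
    (hrec : ∀ n : ℕ, θ + 2 ≤ n →
      U n = 1 + (1 / ((n : ℝ) - θ - 1)) *
        ∑ k ∈ Finset.Icc θ (n - 2), (U k + U (n - k - 2))) :
    Filter.Tendsto (fun n : ℕ => U n / (n : ℝ)) Filter.atTop
      (nhds (Real.exp (-1 - ∑ j ∈ Finset.Icc 1 (θ + 1), (1 : ℝ) / (j : ℝ))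
        * ∫ t in (0 : ℝ)..1,
            Real.exp (t + ∑ j ∈ Finset.Icc 1 (θ + 1), t ^ j / (j : ℝ)))) := by
  have hsum := (linearODECoeffs_shiftedSecondDiff h0 hrec).tendsto_sum_range
    (hasDerivAt_add_sum_pow_div θ) (shiftedSecondDiff_zero h0)
  rw [show -(1 + ∑ j ∈ Icc 1 (θ + 1), (1 : ℝ) ^ j / j) = -1 - ∑ j ∈ Icc 1 (θ + 1), (1 : ℝ) / j by
    simp only [one_pow]; ring] at hsum
  refine tendsto_div_of_tendsto_fwdDiff ((tendsto_add_atTop_iff_nat θ).1 ?_)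
  simpa only [sum_range_succ_shiftedSecondDiff h0] using (tendsto_add_atTop_iff_nat 1).2 hsum

/-- Fix `θ ≥ 1` and let `(U_n)` be the sequence with `U_n = 0` for `n ≤ θ + 1` and
`U_n = 1 + (1/(n − θ − 1)) Σ_{k=θ}^{n−2} (U_k + U_{n−k−2})` for `n ≥ θ + 2` (the
expected number of base pairs of a quasi-random saturated structure on `[1,n]`).
Then `lim_{n→∞} U_n/n = K_θ = e^{−1−H_{θ+1}} ∫₀¹ exp(t + Σ_{j=1}^{θ+1} t^j/j) dt`,
where `H_{θ+1}` is the `(θ+1)`-st harmonic number.  (`K₁ ≈ 0.340633`.) -/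
theorem quasi_random_expected_base_pairs (θ : ℕ) (hθ : 1 ≤ θ) (U : ℕ → ℝ)
    (h0 : ∀ n : ℕ, n ≤ θ + 1 → U n = 0)
    (hrec : ∀ n : ℕ, θ + 2 ≤ n →
      U n = 1 + (1 / ((n : ℝ) - θ - 1)) *
        ∑ k ∈ Finset.Icc θ (n - 2), (U k + U (n - k - 2))) :
    Filter.Tendsto (fun n : ℕ => U n / (n : ℝ)) Filter.atTop
      (nhds (Real.exp (-1 - ∑ j ∈ Finset.Icc 1 (θ + 1), (1 : ℝ) / (j : ℝ))
        * ∫ t in (0 : ℝ)..1,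
            Real.exp (t + ∑ j ∈ Finset.Icc 1 (θ + 1), t ^ j / (j : ℝ)))) :=
  quasi_random_expected_base_pairs_general θ U h0 hrec
end
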